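/- For every integer m ≥ 4, the deterministic query complexity of f_{2m,m} satisfies D(f_{2m,m}) ≥ m². -/

import Mathlib

open Classical
open scoped ENNReal

set_option maxHeartbeats 1000000

/-! ### Deterministic decision trees -/

inductive DTree (ι σ : Type) : Type
  | leaf (b : Bool) : DTree ι σ
  | node (v : ι) (child : σ → DTree ι σ) : DTree ι σ

namespace DTree

variable {ι σ : Type}

/-- The output of the decision tree on input `x`. -/
def eval (x : ι → σ) : DTree ι σ → Bool
  | leaf b => b
  | node v child => (child (x v)).eval x

/-- The list of variables queried by the decision tree on input `x`,
in the order they are queried. -/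
def queryList (x : ι → σ) : DTree ι σ → List ι
  | leaf _ => []
  | node v child => v :: (child (x v)).queryList x

/-- The cost of the decision tree on input `x`: the number of internal nodes visited. -/
def cost (T : DTree ι σ) (x : ι → σ) : ℕ := (T.queryList x).length

/-- `T` computes `f` if it outputs `f x` on every input `x`. -/
def Computes (T : DTree ι σ) (f : (ι → σ) → Bool) : Prop := ∀ x, T.eval x = f x

end DTree

/-- Deterministic query complexity. -/
noncomputable def detComplexity {ι σ : Type} (f : (ι → σ) → Bool) : ℕ :=
  sInf {d : ℕ | ∃ T : DTree ι σ, T.Computes f ∧ ∀ x, T.cost x ≤ d}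

/-- Expected cost of a randomized decision tree (a distribution over deterministic
decision trees) on input `x`. -/
noncomputable def expCost {ι σ : Type} (μ : PMF (DTree ι σ)) (x : ι → σ) : ℝ≥0∞ :=
  ∑' T : DTree ι σ, μ T * (T.cost x : ℝ≥0∞)

/-- Zero-error (Las Vegas) randomized query complexity. -/
noncomputable def R0query {ι σ : Type} (f : (ι → σ) → Bool) : ℝ≥0∞ :=
  ⨅ μ ∈ {μ : PMF (DTree ι σ) | ∀ T ∈ μ.support, T.Computes f},
    ⨆ x : ι → σ, expCost μ x

/-- One-sided error randomized query complexity. -/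
noncomputable def R1query {ι σ : Type} (f : (ι → σ) → Bool) : ℝ≥0∞ :=
  ⨅ μ ∈ {μ : PMF (DTree ι σ) |
      (∀ x, f x = false → ∀ T ∈ μ.support, T.eval x = false) ∧
      (∀ x, f x = true → 1 / 2 ≤ ∑' T : DTree ι σ, if T.eval x = true then μ T else 0)},
    ⨆ x : ι → σ, expCost μ x

/-- Bounded-error (Monte Carlo) randomized query complexity. -/
noncomputable def Rquery {ι σ : Type} (f : (ι → σ) → Bool) : ℝ≥0∞ :=
  ⨅ μ ∈ {μ : PMF (DTree ι σ) |
      ∀ x, 9 / 10 ≤ ∑' T : DTree ι σ, if T.eval x = f x then μ T else 0},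
    ⨆ x : ι → σ, expCost μ x
/-! ### Quantum query algorithms -/

/-- The standard quantum query oracle `O_x |j,p⟩|w⟩ = |j, p + x_j mod S⟩|w⟩`,
as a matrix. -/
noncomputable def qOracle {V ω : Type} [DecidableEq V] [DecidableEq ω] {S : ℕ}
    (x : V → Fin S) : Matrix (V × Fin S × ω) (V × Fin S × ω) ℂ :=
  fun r c => if r = (c.1, c.2.1 + x c.1, c.2.2) then 1 else 0

/-- A quantum query algorithm on inputs `x : V → Fin S`, making `queries` queries, with
workspace `Fin (W+1)`, alternating the unitaries `U 0, …, U queries` with the oracle,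
and measuring with the projector `P` at the end. -/
structure QAlg (V : Type) [Fintype V] [DecidableEq V] (S : ℕ) [NeZero S] where
  queries : ℕ
  W : ℕ
  init : V
  U : ℕ → Matrix (V × Fin S × Fin (W + 1)) (V × Fin S × Fin (W + 1)) ℂ
  hU : ∀ t, (U t).conjTranspose * U t = 1 ∧ U t * (U t).conjTranspose = 1
  P : Matrix (V × Fin S × Fin (W + 1)) (V × Fin S × Fin (W + 1)) ℂ
  hP : P.conjTranspose = P ∧ P * P = P

namespace QAlg

variable {V : Type} [Fintype V] [DecidableEq V] {S : ℕ} [NeZero S]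

/-- The state of the quantum algorithm after `t` steps on input `x`. -/
noncomputable def state (A : QAlg V S) (x : V → Fin S) :
    ℕ → (V × Fin S × Fin (A.W + 1) → ℂ)
  | 0 => (A.U 0).mulVec fun r => if r = (A.init, 0, 0) then 1 else 0
  | t + 1 => (A.U (t + 1)).mulVec ((qOracle x).mulVec (A.state x t))

/-- The probability that the algorithm accepts input `x`: `‖P |Ψ_x⟩‖²`. -/
noncomputable def acceptProb (A : QAlg V S) (x : V → Fin S) : ℝ :=
  ∑ r : V × Fin S × Fin (A.W + 1), Complex.normSq (A.P.mulVec (A.state x A.queries) r)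

end QAlg

/-- Bounded-error quantum query complexity (for functions over a finite input
alphabet `σ`, identified with `Fin (card σ)` via a fixed bijection). -/
noncomputable def Qquery {V σ : Type} [Fintype V] [DecidableEq V] [Fintype σ] [Nonempty σ]
    (f : (V → σ) → Bool) : ℕ :=
  letI : NeZero (Fintype.card σ) := ⟨Fintype.card_ne_zero⟩
  sInf {t : ℕ | ∃ A : QAlg V (Fintype.card σ), A.queries = t ∧
    ∀ x : V → σ,
      (f x = true → 9 / 10 ≤ A.acceptProb fun j => Fintype.equivFin σ (x j)) ∧
      (f x = false → A.acceptProb (fun j => Fintype.equivFin σ (x j)) ≤ 1 / 10)}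

/-- Exact quantum query complexity. -/
noncomputable def QEquery {V σ : Type} [Fintype V] [DecidableEq V] [Fintype σ] [Nonempty σ]
    (f : (V → σ) → Bool) : ℕ :=
  letI : NeZero (Fintype.card σ) := ⟨Fintype.card_ne_zero⟩
  sInf {t : ℕ | ∃ A : QAlg V (Fintype.card σ), A.queries = t ∧
    ∀ x : V → σ,
      (f x = true → A.acceptProb (fun j => Fintype.equivFin σ (x j)) = 1) ∧
      (f x = false → A.acceptProb (fun j => Fintype.equivFin σ (x j)) = 0)}

/-- Approximate degree of a boolean function. -/
noncomputable def adeg {ι : Type} (F : (ι → Bool) → Bool) : ℕ :=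
  sInf {d : ℕ | ∃ p : MvPolynomial ι ℝ, p.totalDegree ≤ d ∧
    ∀ y : ι → Bool, |MvPolynomial.eval (fun i => if y i then (1 : ℝ) else 0) p -
      (if F y then 1 else 0)| ≤ 1 / 10}
/-! ### The pointer functions of Göös–Pitassi–Watson type -/

/-- A symbol of the input alphabet: a boolean value, a left pointer, a right pointer,
and a back/internal pointer (to a cell or a column, depending on `β`). -/
structure PSym (n m : ℕ) (β : Type) where
  val : Bool
  lp : Option (Fin n × Fin m)
  rp : Option (Fin n × Fin m)
  bp : Option β
deriving DecidableEq

/-- The all-ones symbol `(1,⊥,⊥,⊥)`. -/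
def PSym.one (n m : ℕ) (β : Type) : PSym n m β := ⟨true, none, none, none⟩

/-- The symbol `(0,⊥,⊥,⊥)`. -/
def PSym.zero (n m : ℕ) (β : Type) : PSym n m β := ⟨false, none, none, none⟩

def PSym.equivProd (n m : ℕ) (β : Type) :
    PSym n m β ≃ Bool × Option (Fin n × Fin m) × Option (Fin n × Fin m) × Option β where
  toFun v := (v.val, v.lp, v.rp, v.bp)
  invFun p := ⟨p.1, p.2.1, p.2.2.1, p.2.2.2⟩
  left_inv _ := rfl
  right_inv _ := rfl

instance {n m : ℕ} {β : Type} [Fintype β] : Fintype (PSym n m β) :=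
  Fintype.ofEquiv _ (PSym.equivProd n m β).symm

instance {n m : ℕ} {β : Type} : Nonempty (PSym n m β) := ⟨PSym.one n m β⟩

/-- The sequence of k bits of `j`, most significant first:  the root-to-leaf path
(`false` = left, `true` = right) of the `j`-th leaf in the complete binary tree of depth `k`. -/
def bitsPath (k j : ℕ) : List Bool :=
  ((List.range k).reverse).map fun i => j.testBit i

/-- The root-to-leaf path of the leaf labeled `j` (0-indexed) in the balanced binary tree
with `m` leaves: the complete binary tree if `m` is a power of 2, and otherwise the complete
binary tree on `2 ^ ⌊log₂ m⌋` leaves with a pair of children added to each of the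
`m - 2 ^ ⌊log₂ m⌋` leftmost leaves. -/
def treePath (m j : ℕ) : List Bool :=
  if m - 2 ^ Nat.log 2 m = 0 then bitsPath (Nat.log 2 m) j
  else if j < 2 * (m - 2 ^ Nat.log 2 m) then
    bitsPath (Nat.log 2 m) (j / 2) ++ [j % 2 == 1]
  else bitsPath (Nat.log 2 m) (j - (m - 2 ^ Nat.log 2 m))

/-- Starting at cell `a` and following the left/right pointers of `x` as prescribed by the
list `p` of moves (`false` = left pointer, `true` = right pointer); returns `none` if a
null pointer is encountered. -/
def followPath {n m : ℕ} {β : Type} (x : Fin n × Fin m → PSym n m β)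
    (a : Fin n × Fin m) (p : List Bool) : Option (Fin n × Fin m) :=
  p.foldl (fun acc b => acc.bind fun c => if b then (x c).rp else (x c).lp) (some a)

/-- The conditions for `x` to be a 1-input of `f_{n,m}`, with marked column `b` and special
element `a`: (1) `b` is the unique all-1 column; (2) `a` is the unique cell of column `b`
with `x_a ≠ (1,⊥,⊥,⊥)`; (3) for every column `j ≠ b` the tree path from `a` to the leaf
labeled `j` exists, and ends at a cell `ℓ_j` of column `j` holding a 0; (4) the back pointer
of each `ℓ_j` points to the column `b`. -/
def fCond (n m : ℕ) (x : Fin n × Fin m → PSym n m (Fin m))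
    (b : Fin m) (a : Fin n × Fin m) : Prop :=
  (∀ j : Fin m, (∀ i : Fin n, (x (i, j)).val = true) ↔ j = b) ∧
  a.2 = b ∧
  (∀ i : Fin n, x (i, b) ≠ PSym.one n m (Fin m) ↔ (i, b) = a) ∧
  ∀ j : Fin m, j ≠ b →
    ∃ ℓ : Fin n × Fin m, followPath x a (treePath m j.1) = some ℓ ∧
      ℓ.2 = j ∧ (x ℓ).val = false ∧ (x ℓ).bp = some b

/-- The pointer function `f_{n,m}`, with back pointers to the marked column. -/
noncomputable def fFun (n m : ℕ) (x : Fin n × Fin m → PSym n m (Fin m)) : Bool :=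
  if ∃ b a, fCond n m x b a then true else false

/-- The conditions for `x` to be a 1-input of `g_{n,m}`, with marked column `b` and special
element `a`: (1)–(3) as for `f_{n,m}`, and (4′) the set of columns `j ≠ b` whose highlighted
zero `ℓ_j` has back pointer to `a` has size exactly `m/2`. -/
def gCond (n m : ℕ) (x : Fin n × Fin m → PSym n m (Fin n × Fin m))
    (b : Fin m) (a : Fin n × Fin m) : Prop :=
  (∀ j : Fin m, (∀ i : Fin n, (x (i, j)).val = true) ↔ j = b) ∧
  a.2 = b ∧
  (∀ i : Fin n, x (i, b) ≠ PSym.one n m (Fin n × Fin m) ↔ (i, b) = a) ∧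
  (∀ j : Fin m, j ≠ b →
    ∃ ℓ : Fin n × Fin m, followPath x a (treePath m j.1) = some ℓ ∧
      ℓ.2 = j ∧ (x ℓ).val = false) ∧
  {j : Fin m | j ≠ b ∧ ∃ ℓ : Fin n × Fin m,
      followPath x a (treePath m j.1) = some ℓ ∧ (x ℓ).bp = some a}.ncard = m / 2

/-- The pointer function `g_{n,m}`, where exactly `m/2` of the highlighted zeroes point
back to the special element. -/
noncomputable def gFun (n m : ℕ) (x : Fin n × Fin m → PSym n m (Fin n × Fin m)) : Bool :=
  if ∃ b a, gCond n m x b a then true else false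

/-- Column `j` is good in `x` (for `g_{n,m}`): `x` is a 1-input with marked column `b ≠ j`
and special element `a`, and the highlighted zero of column `j` points back to `a`. -/
def goodColumn (n m : ℕ) (x : Fin n × Fin m → PSym n m (Fin n × Fin m)) (j : Fin m) : Prop :=
  ∃ b a, gCond n m x b a ∧ j ≠ b ∧
    ∃ ℓ : Fin n × Fin m, followPath x a (treePath m j.1) = some ℓ ∧ (x ℓ).bp = some a

/-- The conditions for `x` to be a 1-input of `h_{k,n,m}`, with marked columns `b 0,…,b (k-1)`
and special elements `a 0,…,a (k-1)`: (1) the `b s` are exactly the all-1 columns; (2) `a s` is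
the unique cell of column `b s` with `x_{a s} ≠ (1,⊥,⊥,⊥)`; (3) the internal pointers of the
`a s` form a cycle and all the `a s` have equal left pointers and equal right pointers;
(4) for every non-marked column `j` the tree path from any `a s` to the leaf labeled `j`
exists and ends at a cell `ℓ_j` of column `j` holding a 0. -/
def hCond (k n m : ℕ) (x : Fin n × Fin m → PSym n m (Fin n × Fin m))
    (b : Fin k → Fin m) (a : Fin k → Fin n × Fin m) : Prop :=
  Function.Injective b ∧
  (∀ j : Fin m, (∀ i : Fin n, (x (i, j)).val = true) ↔ ∃ s, b s = j) ∧
  (∀ s, (a s).2 = b s) ∧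
  (∀ s, ∀ i : Fin n, x (i, b s) ≠ PSym.one n m (Fin n × Fin m) ↔ (i, b s) = a s) ∧
  (∀ s : Fin k, (x (a s)).bp = some (a ⟨(s.1 + 1) % k, Nat.mod_lt _ s.pos⟩)) ∧
  (∀ s t : Fin k, (x (a s)).lp = (x (a t)).lp ∧ (x (a s)).rp = (x (a t)).rp) ∧
  ∀ j : Fin m, (∀ s, b s ≠ j) → ∀ s : Fin k,
    ∃ ℓ : Fin n × Fin m, followPath x (a s) (treePath m j.1) = some ℓ ∧
      ℓ.2 = j ∧ (x ℓ).val = false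

/-- The pointer function `h_{k,n,m}` with `k` marked columns and no back pointers. -/
noncomputable def hFun (k n m : ℕ) (x : Fin n × Fin m → PSym n m (Fin n × Fin m)) : Bool :=
  if ∃ b a, hCond k n m x b a then true else false

/-- The hard input `x^ℓ`: cell `(i,j)` holds `(0,⊥,⊥,⊥)` if `i = ℓ j` and `(1,⊥,⊥,⊥)`
otherwise. -/
def xhard (n m : ℕ) (β : Type) (ℓ : Fin m → Fin n) : Fin n × Fin m → PSym n m β :=
  fun c => if c.1 = ℓ c.2 then PSym.zero n m β else PSym.one n m β

/-- The set of (distinct) cells queried among the first `t` queries of `T` on input `x`. -/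
def queriedUpTo {ι σ : Type} [DecidableEq ι] (T : DTree ι σ) (x : ι → σ) (t : ℕ) :
    Finset ι :=
  ((T.queryList x).take t).toFinset
/-! ### The progress measure for the hard distribution `x^ℓ` -/

/-- Column `j` is compromised (for the input `x^ℓ`), given the set `Q` of queried cells:
the zero cell `(ℓ j, j)` has been queried, or more than `n/2` cells of column `j` have been
queried. -/
def compromisedCol (n m : ℕ) (ℓ : Fin m → Fin n) (Q : Finset (Fin n × Fin m))
    (j : Fin m) : Prop :=
  (ℓ j, j) ∈ Q ∨ n < 2 * (Q.filter fun c => c.2 = j).card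

/-- The progress measure `I_t = A_t + (2/n)·B_t` of the decision tree `T` on the input `x^ℓ`
after `t` queries, where `A_t` is the number of compromised columns and `B_t` is the number
of queried cells lying outside compromised columns. -/
noncomputable def Imeasure (n m : ℕ)
    (T : DTree (Fin n × Fin m) (PSym n m (Fin n × Fin m))) (ℓ : Fin m → Fin n) (t : ℕ) : ℝ :=
  ({j : Fin m |
      compromisedCol n m ℓ (queriedUpTo T (xhard n m (Fin n × Fin m) ℓ) t) j}.ncard : ℝ) +
    (2 / n) * ({c : Fin n × Fin m | c ∈ queriedUpTo T (xhard n m (Fin n × Fin m) ℓ) t ∧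
      ¬ compromisedCol n m ℓ (queriedUpTo T (xhard n m (Fin n × Fin m) ℓ) t) c.2}.ncard : ℝ)
/-! ### The balanced binary tree, via root-to-node paths -/

/-- The node set of the balanced binary tree with `m` leaves: each node is identified with
the left/right path from the root to it, so the nodes are exactly the prefixes of the
root-to-leaf paths. -/
def treeNodes (m : ℕ) : Finset (List Bool) :=
  (Finset.range m).biUnion fun j => (treePath m j).inits.toFinset

/-- The leaves of the balanced binary tree with `m` leaves. -/
def leafNodes (m : ℕ) : Finset (List Bool) :=
  (Finset.range m).image fun j => treePath m j

/-- The internal nodes of the balanced binary tree with `m` leaves. -/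
def internalNodes (m : ℕ) : Finset (List Bool) :=
  treeNodes m \ leafNodes m

/-- The subtree rooted at a node `u`: all nodes of which `u` is a prefix. -/
def subtreeOf (m : ℕ) (u : List Bool) : Finset (List Bool) :=
  (treeNodes m).filter fun w => u <+: w

/-! ### The hard distribution for `h_{1,n,m}` -/

/-- A parameter quadruple `(v, π, ℓᴸ, ℓᴺ)` for the hard distribution: a bit `v`, a map `π`
from internal tree nodes to columns, and row maps `ℓᴸ, ℓᴺ` for leaves resp. internal nodes. -/
abbrev HardQ (n m : ℕ) : Type :=
  Bool × ({u : List Bool // u ∈ internalNodes m} → Fin m) × (Fin m → Fin n) × (Fin m → Fin n)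

/-- The valid parameter quadruples: `π` injective and `ℓᴸ j ≠ ℓᴺ j` for all `j`. -/
noncomputable def hardSet (n m : ℕ) : Finset (HardQ n m) :=
  Finset.univ.filter fun q => Function.Injective q.2.1 ∧ ∀ j, q.2.2.1 j ≠ q.2.2.2 j

/-- The column of the root of the tree (`none` if the tree has no internal node). -/
noncomputable def rootCol (n m : ℕ) (q : HardQ n m) : Option (Fin m) :=
  if h : ([] : List Bool) ∈ internalNodes m then some (q.2.1 ⟨[], h⟩) else none

/-- The cell where a child node `w` of an internal node is placed: internal nodes go to
cell `(ℓᴺ (π w), π w)`, the leaf labeled `j` goes to cell `(ℓᴸ j, j)`, and the removed leaf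
(the one labeled by the root's column) yields a null pointer. -/
noncomputable def childCell (n m : ℕ) (q : HardQ n m) (w : List Bool) :
    Option (Fin n × Fin m) :=
  if h : w ∈ internalNodes m then some (q.2.2.2 (q.2.1 ⟨w, h⟩), q.2.1 ⟨w, h⟩)
  else if h2 : ∃ j : Fin m, w = treePath m j.1 ∧ some j ≠ rootCol n m q then
    some (q.2.2.1 (Classical.choose h2), Classical.choose h2)
  else none

/-- The input of the hard distribution determined by the parameter quadruple `q`:
the internal node `u` of the tree is placed at cell `(ℓᴺ (π u), π u)` with left and right
pointers to the cells of its children, value `v` and a self-loop internal pointer if `u` is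
the root, and value 0 otherwise; for `j ≠ π(root)`, the leaf labeled `j` is placed at cell
`(ℓᴸ j, j)` with value 0 and null pointers; all the remaining cells hold `(1,⊥,⊥,⊥)`. -/
noncomputable def hardInput (n m : ℕ) (q : HardQ n m) :
    Fin n × Fin m → PSym n m (Fin n × Fin m) :=
  fun c =>
    if h : ∃ u : {u : List Bool // u ∈ internalNodes m}, q.2.1 u = c.2 ∧ q.2.2.2 c.2 = c.1 then
      { val := if (Classical.choose h).1 = [] then q.1 else false
        lp := childCell n m q ((Classical.choose h).1 ++ [false])
        rp := childCell n m q ((Classical.choose h).1 ++ [true])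
        bp := if (Classical.choose h).1 = [] then some c else none }
    else if some c.2 ≠ rootCol n m q ∧ c.1 = q.2.2.1 c.2 then PSym.zero n m (Fin n × Fin m)
    else PSym.one n m (Fin n × Fin m)

/-- Column `j` directly satisfies (i) or (ii): one of the cells `(ℓᴸ j, j)`, `(ℓᴺ j, j)` has
been queried, or more than half of the cells of column `j` have been queried. -/
def colBad (n m : ℕ) (q : HardQ n m) (Q : Finset (Fin n × Fin m)) (j : Fin m) : Prop :=
  (q.2.2.1 j, j) ∈ Q ∨ (q.2.2.2 j, j) ∈ Q ∨ n < 2 * (Q.filter fun c => c.2 = j).card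

/-- Column `j` is compromised: it satisfies (i) or (ii), or some ancestor `u` of `π⁻¹(j)`
in the tree is such that column `π u` satisfies (i) or (ii). -/
def compromisedCol19 (n m : ℕ) (q : HardQ n m) (Q : Finset (Fin n × Fin m))
    (j : Fin m) : Prop :=
  colBad n m q Q j ∨
  ∃ w u : {u : List Bool // u ∈ internalNodes m}, q.2.1 w = j ∧
    u.1 <+: w.1 ∧ u.1 ≠ w.1 ∧ colBad n m q Q (q.2.1 u)

/-- The progress measure `I_t = min{A_t + (4·C0·log₂ m / n)·B_t, m/2}` of the decision tree
`D` on the hard-distribution input given by `q` after `t` queries, where `A_t` is the number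
of compromised columns and `B_t` the number of queried cells outside compromised columns. -/
noncomputable def Imeasure19 (n m : ℕ) (C0 : ℝ)
    (D : DTree (Fin n × Fin m) (PSym n m (Fin n × Fin m))) (q : HardQ n m) (t : ℕ) : ℝ :=
  min
    (({j : Fin m | compromisedCol19 n m q (queriedUpTo D (hardInput n m q) t) j}.ncard : ℝ) +
      (4 * C0 * Real.logb 2 m / n) *
        ({c : Fin n × Fin m | c ∈ queriedUpTo D (hardInput n m q) t ∧
          ¬ compromisedCol19 n m q (queriedUpTo D (hardInput n m q) t) c.2}.ncard : ℝ))
    (m / 2)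

/-!
The adversary answers `(1,⊥,⊥,⊥)` to the first `m` queries in each column and zeroes
afterwards, whose back pointers run through all `m` columns: a column with fewer than `m`
fixed cells holds only ones, and a full column holds a zero pointing to every column.
Filling the unqueried cells with zeroes therefore always gives a 0-input. After fewer than
`m²` queries, however, some column `b` still has fewer than `m` fixed cells, and the answers
also extend to a 1-input with marked column `b`: the root of the tree goes to a free cell of
`b`, the other internal nodes (fewer than `m - 1`) to free cells outside `b`, and the leaf of
each column `j ≠ b` to a free cell of `j` or, if `j` is full, to its zero pointing to `b`.
There are enough free cells since `2m² - m² - 2m - m ≥ m - 1` for `m ≥ 4`.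
-/

open Finset Function

namespace DTree

variable {ι σ : Type}

def Extends (x : ι → σ) (p : ι → Option σ) : Prop := ∀ c s, p c = some s → x c = s

section Assigned

variable [Fintype ι]

def assigned (p : ι → Option σ) : Finset ι := univ.filter fun c => (p c).isSome

theorem assigned_eq_univ {q : ι → Option σ} (hq : ∀ i, q i ≠ none) : assigned q = univ :=
  filter_true_of_mem fun i _ => Option.isSome_iff_ne_none.2 (hq i)

theorem exists_eq_none_of_card_assigned_lt {q : ι → Option σ}
    (hq : #(assigned q) < Fintype.card ι) : ∃ i, q i = none := by
  by_contra! h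
  simp [assigned_eq_univ h] at hq

theorem card_assigned_lt_of_eq_none {q : ι → Option σ} {i : ι} (hi : q i = none) :
    #(assigned q) < Fintype.card ι :=
  card_lt_univ_of_notMem (x := i) (by simp [assigned, hi])

theorem card_assigned_update_of_eq_none [DecidableEq ι] {q : ι → Option σ} {i : ι}
    (hi : q i = none) (s : σ) : #(assigned (update q i (some s))) = #(assigned q) + 1 := by
  have : assigned (update q i (some s)) = insert i (assigned q) := by
    ext c
    by_cases hc : c = i
    · subst hc; simp [assigned]
    · simp [assigned, hc]
  rw [this, card_insert_of_notMem (by simp [assigned, hi])]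

end Assigned

variable [DecidableEq ι]

def fullTree (f : (ι → σ) → Bool) : List ι → (ι → σ) → DTree ι σ
  | [], y => leaf (f y)
  | v :: vs, y => node v fun s => fullTree f vs (update y v s)

theorem eval_fullTree (f : (ι → σ) → Bool) (x : ι → σ) (l : List ι) (y : ι → σ) :
    (fullTree f l y).eval x = f fun i => if i ∈ l then x i else y i := by
  induction l generalizing y with
  | nil => simp [fullTree, eval]
  | cons v vs ih =>
    simp only [fullTree, eval, ih, List.mem_cons]
    congr 1
    funext i
    by_cases hi : i = v <;> by_cases hvs : i ∈ vs <;> simp_all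

theorem cost_fullTree (f : (ι → σ) → Bool) (x : ι → σ) (l : List ι) (y : ι → σ) :
    (fullTree f l y).cost x = l.length := by
  induction l generalizing y with
  | nil => rfl
  | cons v vs ih => exact congrArg (· + 1) (ih _)

theorem exists_computes_cost_eq [Fintype ι] [Nonempty σ] (f : (ι → σ) → Bool) :
    ∃ T : DTree ι σ, T.Computes f ∧ ∀ x, T.cost x = Fintype.card ι := by
  refine ⟨fullTree f univ.toList fun _ => Classical.arbitrary σ, fun x => ?_, fun x => ?_⟩
  · simp [eval_fullTree]
  · simp [cost_fullTree]

def runAdversary (A : (ι → Option σ) → ι → σ) :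
    DTree ι σ → (ι → Option σ) → ι → Option σ
  | leaf _, p => p
  | node v child, p =>
    let s := (p v).getD (A p v)
    runAdversary A (child s) (update p v (some s))

variable (A : (ι → Option σ) → ι → σ)

theorem runAdversary_apply_of_eq_some (T : DTree ι σ) {p : ι → Option σ} {c : ι} {s : σ}
    (h : p c = some s) : runAdversary A T p c = some s := by
  induction T generalizing p with
  | leaf => exact h
  | node v child ih =>
    apply ih
    by_cases hc : c = v
    · subst hc; simp [h]
    · rwa [update_of_ne hc]

theorem runAdversary_node_apply_self (v : ι) (child : σ → DTree ι σ) (p : ι → Option σ) :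
    runAdversary A (node v child) p v = some ((p v).getD (A p v)) :=
  runAdversary_apply_of_eq_some A (child _) (update_self _ _ _)

theorem eval_eq_of_extends_runAdversary (T : DTree ι σ) {p : ι → Option σ} {x y : ι → σ}
    (hx : Extends x (runAdversary A T p)) (hy : Extends y (runAdversary A T p)) :
    T.eval x = T.eval y := by
  induction T generalizing p with
  | leaf => rfl
  | node v child ih =>
    have hv := runAdversary_node_apply_self A v child p
    simp only [eval, hx _ _ hv, hy _ _ hv]
    exact ih _ hx hy

theorem mem_queryList_of_runAdversary (T : DTree ι σ) {p : ι → Option σ} {x : ι → σ}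
    (hx : Extends x (runAdversary A T p)) {c : ι} (hc : (runAdversary A T p c).isSome) :
    (p c).isSome ∨ c ∈ T.queryList x := by
  induction T generalizing p with
  | leaf => exact Or.inl hc
  | node v child ih =>
    have hv := runAdversary_node_apply_self A v child p
    simp only [queryList, hx _ _ hv, List.mem_cons]
    by_cases hcv : c = v
    · exact Or.inr (Or.inl hcv)
    · rcases ih _ hx hc with h | h
      · rw [update_of_ne hcv] at h; exact Or.inl h
      · exact Or.inr (Or.inr h)

theorem card_assigned_runAdversary_le [Fintype ι] (T : DTree ι σ) {x : ι → σ}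
    (hx : Extends x (runAdversary A T fun _ => none)) :
    #(assigned (runAdversary A T fun _ => none)) ≤ T.cost x := by
  calc #(assigned (runAdversary A T fun _ => none))
      ≤ #(T.queryList x).toFinset := by
        refine card_le_card fun c hc => List.mem_toFinset.2 ?_
        simpa using mem_queryList_of_runAdversary A T hx (mem_filter.1 hc).2
    _ ≤ T.cost x := List.toFinset_card_le _

theorem runAdversary_induction (I : (ι → Option σ) → Prop)
    (hI : ∀ p v, p v = none → I p → I (update p v (some (A p v))))
    (T : DTree ι σ) {p : ι → Option σ} (hp : I p) : I (runAdversary A T p) := by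
  induction T generalizing p with
  | leaf => exact hp
  | node v child ih =>
    apply ih
    rcases hv : p v with _ | s
    · simpa [hv] using hI p v hv hp
    · rwa [Option.getD_some, ← hv, update_eq_self]

theorem le_detComplexity_of_adversary [Fintype ι] [Nonempty σ] {f : (ι → σ) → Bool}
    {d : ℕ} (I : (ι → Option σ) → Prop) (hI₀ : I fun _ => none)
    (hI : ∀ p v, p v = none → I p → I (update p v (some (A p v))))
    (hsplit : ∀ p, I p → #(assigned p) < d →
      ∃ x y, Extends x p ∧ Extends y p ∧ f x ≠ f y) :
    d ≤ detComplexity f := by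
  obtain ⟨T₀, hT₀, hcost₀⟩ := exists_computes_cost_eq f
  refine le_csInf ⟨_, T₀, hT₀, fun x => (hcost₀ x).le⟩ ?_
  rintro d' ⟨T, hT, hcost⟩
  by_contra! hd
  set p := runAdversary A T fun _ => none
  have hx₀ : Extends (fun c => (p c).getD (Classical.arbitrary σ)) p := by
    intro c s h; simp [h]
  obtain ⟨x, y, hx, hy, hxy⟩ := hsplit p (runAdversary_induction A I hI T hI₀)
    ((card_assigned_runAdversary_le A T hx₀).trans_lt ((hcost _).trans_lt hd))
  exact hxy (by rw [← hT x, ← hT y, eval_eq_of_extends_runAdversary A T hx hy])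

end DTree

section BalancedTree

theorem length_bitsPath (k j : ℕ) : (bitsPath k j).length = k := by
  simp [bitsPath]

theorem bitsPath_inj {k j j' : ℕ} (hj : j < 2 ^ k) (hj' : j' < 2 ^ k)
    (h : bitsPath k j = bitsPath k j') : j = j' := by
  refine Nat.eq_of_testBit_eq fun i => ?_
  rcases lt_or_ge i k with hik | hik
  · exact List.map_inj_left.1 h i (by simp [hik])
  · have hpow := Nat.pow_le_pow_right two_pos hik
    rw [Nat.testBit_lt_two_pow (hj.trans_le hpow), Nat.testBit_lt_two_pow (hj'.trans_le hpow)]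

/-- With `K = ⌊log₂ m⌋` and `e = m - 2 ^ K`, the leaves `0, …, 2e - 1` sit in the extra last
level (as children of the level-`K` node `j / 2`), the others at level `K`. -/
theorem treePath_eq (m j : ℕ) :
    treePath m j = if j < 2 * (m - 2 ^ Nat.log 2 m) then
      bitsPath (Nat.log 2 m) (j / 2) ++ [j % 2 == 1]
    else bitsPath (Nat.log 2 m) (j - (m - 2 ^ Nat.log 2 m)) := by
  unfold treePath
  split_ifs <;> simp_all

theorem length_treePath_le (m j : ℕ) : (treePath m j).length ≤ Nat.log 2 m + 1 := by
  rw [treePath_eq]; split_ifs <;> simp [length_bitsPath]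

theorem log_le_length_treePath (m j : ℕ) : Nat.log 2 m ≤ (treePath m j).length := by
  rw [treePath_eq]; split_ifs <;> simp [length_bitsPath]

variable {m : ℕ}

theorem treePath_prefix_free {j j' : ℕ} (hj : j < m) (hj' : j' < m)
    (h : treePath m j <+: treePath m j') : j = j' := by
  have hK : 2 ^ Nat.log 2 m ≤ m := Nat.pow_log_le_self 2 (by omega)
  have hK' : m < 2 * 2 ^ Nat.log 2 m := by
    rw [← pow_succ']; exact Nat.lt_pow_succ_log_self one_lt_two m
  rw [treePath_eq, treePath_eq] at h
  split_ifs at h with h₁ h₂ h₂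
  · obtain ⟨hdiv, hmod⟩ := List.append_inj (h.eq_of_length (by simp [length_bitsPath]))
      (by simp [length_bitsPath])
    have := bitsPath_inj (by omega) (by omega) hdiv
    simp only [List.cons.injEq, and_true] at hmod
    rcases Nat.mod_two_eq_zero_or_one j with h3 | h3 <;>
      rcases Nat.mod_two_eq_zero_or_one j' with h4 | h4 <;> simp [h3, h4] at hmod <;> omega
  · simpa [length_bitsPath] using h.length_le
  · have := bitsPath_inj (k := Nat.log 2 m) (by omega) (by omega)
      ((List.prefix_of_prefix_length_le h (List.prefix_append _ _)
        (by simp [length_bitsPath])).eq_of_length (by simp [length_bitsPath]))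
    omega
  · have := bitsPath_inj (by omega) (by omega) (h.eq_of_length (by simp [length_bitsPath]))
    omega

theorem treePath_inj {j j' : ℕ} (hj : j < m) (hj' : j' < m)
    (h : treePath m j = treePath m j') : j = j' :=
  treePath_prefix_free hj hj' (h ▸ List.prefix_refl _)

theorem mem_internalNodes_of_prefix {u : List Bool} {j : ℕ} (hj : j < m)
    (hu : u <+: treePath m j) (hne : u ≠ treePath m j) : u ∈ internalNodes m := by
  simp only [internalNodes, treeNodes, leafNodes, mem_sdiff, mem_biUnion, mem_range,
    List.mem_toFinset, List.mem_inits, mem_image, not_exists, not_and]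
  refine ⟨⟨j, hj, hu⟩, fun j' hj' hu' => hne ?_⟩
  subst hu'
  rw [treePath_prefix_free hj' hj hu]

theorem treePath_not_mem_internalNodes {j : ℕ} (hj : j < m) :
    treePath m j ∉ internalNodes m := by
  simp only [internalNodes, leafNodes, mem_sdiff, mem_image, mem_range, not_and, not_not]
  exact fun _ => ⟨j, hj, rfl⟩

theorem nil_mem_internalNodes (hm : 2 ≤ m) : [] ∈ internalNodes m := by
  refine mem_internalNodes_of_prefix (j := 0) (by omega) List.nil_prefix fun h => ?_
  have hlen := log_le_length_treePath m 0
  rw [← h, List.length_nil] at hlen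
  have := Nat.log_pos one_lt_two hm
  omega

theorem card_internalNodes_lt (hm : 0 < m) : #(internalNodes m) < m := by
  set K := Nat.log 2 m with hKdef
  have hK : 2 ^ K ≤ m := Nat.pow_log_le_self 2 (by omega)
  have hsub : internalNodes m ⊆
      ((range K).biUnion fun t => (univ : Finset (Fin t → Bool)).image List.ofFn) ∪
        (range (m - 2 ^ K)).image (bitsPath K) := by
    intro u hu
    simp only [internalNodes, treeNodes, leafNodes, mem_sdiff, mem_biUnion, mem_range,
      List.mem_toFinset, List.mem_inits, mem_image, not_exists, not_and] at hu
    obtain ⟨⟨j, hj, hu⟩, hleaf⟩ := hu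
    have hlt : u.length < (treePath m j).length :=
      lt_of_le_of_ne hu.length_le fun h => hleaf j hj (hu.eq_of_length h).symm
    rcases lt_or_eq_of_le (Nat.lt_succ_iff.1 (hlt.trans_le (length_treePath_le m j))) with
      hshort | hK'
    · exact mem_union_left _ (mem_biUnion.2 ⟨u.length, mem_range.2 hshort,
        mem_image.2 ⟨u.get, mem_univ _, List.ofFn_get u⟩⟩)
    · rw [treePath_eq, ← hKdef] at hu hlt
      rw [← hKdef] at hK'
      split_ifs at hu hlt with hext
      · refine mem_union_right _ (mem_image.2 ⟨j / 2, mem_range.2 (by omega), ?_⟩)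
        exact ((List.prefix_of_prefix_length_le hu (List.prefix_append _ _)
          (by simp [length_bitsPath, hK'])).eq_of_length (by simp [length_bitsPath, hK'])).symm
      · simp [length_bitsPath] at hlt; omega
  have hshort : #((range K).biUnion fun t => (univ : Finset (Fin t → Bool)).image List.ofFn)
      < 2 ^ K :=
    calc _ ≤ ∑ t ∈ range K, #((univ : Finset (Fin t → Bool)).image List.ofFn) :=
          card_biUnion_le
      _ ≤ ∑ t ∈ range K, 2 ^ t := sum_le_sum fun t _ => card_image_le.trans (by simp)
      _ < 2 ^ K := Nat.geomSum_lt le_rfl fun t ht => mem_range.1 ht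
  calc #(internalNodes m) ≤ _ := card_le_card hsub
    _ ≤ _ + _ := card_union_le _ _
    _ < 2 ^ K + (m - 2 ^ K) := add_lt_add_of_lt_of_le hshort (card_image_le.trans (by simp))
    _ = m := by omega

end BalancedTree

theorem followPath_append_singleton {n m : ℕ} {β : Type} (x : Fin n × Fin m → PSym n m β)
    (a : Fin n × Fin m) (u : List Bool) (d : Bool) :
    followPath x a (u ++ [d]) =
      (followPath x a u).bind fun c => if d then (x c).rp else (x c).lp := by
  simp [followPath, List.foldl_append]

namespace PointerFn

open DTree

abbrev Cell (m : ℕ) := Fin (2 * m) × Fin m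

abbrev Symb (m : ℕ) := PSym (2 * m) m (Fin m)

variable {m : ℕ}

def zeroTo (r : Fin m) : Symb m := ⟨false, none, none, some r⟩

def column (p : Cell m → Option (Symb m)) (j : Fin m) : Fin (2 * m) → Option (Symb m) :=
  fun i => p (i, j)

def columnAnswer [NeZero m] (q : Fin (2 * m) → Option (Symb m)) : Symb m :=
  if #(assigned q) < m then PSym.one _ _ _ else zeroTo (Fin.ofNat m (#(assigned q) - m))

def adversary [NeZero m] (p : Cell m → Option (Symb m)) (c : Cell m) : Symb m :=
  columnAnswer (column p c.2)

structure ColumnInv (q : Fin (2 * m) → Option (Symb m)) : Prop where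
  eq_one : #(assigned q) < m → ∀ i s, q i = some s → s = PSym.one _ _ _
  exists_zeroTo : ∀ r : Fin m, m + r < #(assigned q) → ∃ i, q i = some (zeroTo r)

theorem ColumnInv.update [NeZero m] {q : Fin (2 * m) → Option (Symb m)} (hq : ColumnInv q)
    {i : Fin (2 * m)} (hi : q i = none) : ColumnInv (update q i (some (columnAnswer q))) := by
  have hcard := card_assigned_update_of_eq_none hi (columnAnswer q)
  have hlt : #(assigned q) < 2 * m := by simpa using card_assigned_lt_of_eq_none hi
  have hne : ∀ i', q i' ≠ none → i' ≠ i := fun i' h he => h (he ▸ hi)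
  by_cases hsmall : #(assigned q) < m
  · have hone : columnAnswer q = PSym.one _ _ _ := if_pos hsmall
    refine ⟨fun h i' s hs => ?_, fun r hr => by omega⟩
    by_cases hi' : i' = i
    · subst hi'; simpa [hone] using hs.symm
    · rw [update_of_ne hi'] at hs; exact hq.eq_one (by omega) i' s hs
  · have hzero : columnAnswer q = zeroTo ⟨#(assigned q) - m, by omega⟩ := by
      rw [columnAnswer, if_neg hsmall]
      congr 1
      ext
      simp only [Fin.val_ofNat]
      exact Nat.mod_eq_of_lt (by omega)
    refine ⟨fun h => by omega, fun r hr => ?_⟩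
    by_cases hr' : m + r < #(assigned q)
    · obtain ⟨i', hi'⟩ := hq.exists_zeroTo r hr'
      exact ⟨i', by rwa [update_of_ne (hne i' (by simp [hi']))]⟩
    · refine ⟨i, ?_⟩
      rw [update_self, hzero]
      congr 2
      ext
      simp only
      omega

theorem ColumnInv.exists_eq_none_or_zeroTo {q : Fin (2 * m) → Option (Symb m)}
    (hq : ColumnInv q) (r : Fin m) : ∃ i, q i = none ∨ q i = some (zeroTo r) := by
  by_cases hfull : #(assigned q) < 2 * m
  · obtain ⟨i, hi⟩ := exists_eq_none_of_card_assigned_lt (q := q) (by simpa using hfull)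
    exact ⟨i, Or.inl hi⟩
  · obtain ⟨i, hi⟩ := hq.exists_zeroTo r (by omega)
    exact ⟨i, Or.inr hi⟩

def AdversaryInv (p : Cell m → Option (Symb m)) : Prop := ∀ j, ColumnInv (column p j)

theorem adversaryInv_empty : AdversaryInv (m := m) fun _ => none := fun _ =>
  { eq_one := fun _ _ _ h => nomatch h
    exists_zeroTo := fun _ h => by simp [assigned, column] at h }

theorem column_update_self (p : Cell m → Option (Symb m)) (i : Fin (2 * m)) (j : Fin m)
    (s : Option (Symb m)) : column (update p (i, j) s) j = update (column p j) i s := by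
  funext i'
  simp [column, update_apply]

theorem column_update_of_ne (p : Cell m → Option (Symb m)) (i : Fin (2 * m)) {j j' : Fin m}
    (hj : j' ≠ j) (s : Option (Symb m)) : column (update p (i, j) s) j' = column p j' := by
  funext i'
  exact update_of_ne (fun h => hj (congrArg Prod.snd h)) _ _

theorem AdversaryInv.update [NeZero m] {p : Cell m → Option (Symb m)} (hp : AdversaryInv p)
    {c : Cell m} (hc : p c = none) : AdversaryInv (update p c (some (adversary p c))) := by
  obtain ⟨i, j⟩ := c
  intro j'
  by_cases hj : j' = j
  · subst hj
    rw [column_update_self]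
    exact (hp j').update hc
  · rw [column_update_of_ne p i hj]
    exact hp j'

theorem sum_card_assigned_column (p : Cell m → Option (Symb m)) :
    ∑ j, #(assigned (column p j)) = #(assigned p) := by
  rw [assigned, card_filter, Fintype.sum_prod_type_right]
  refine sum_congr rfl fun j _ => ?_
  rw [assigned, card_filter]
  rfl

theorem exists_card_assigned_column_lt {p : Cell m → Option (Symb m)}
    (hp : #(assigned p) < m * m) : ∃ b, #(assigned (column p b)) < m := by
  by_contra! h
  have := card_nsmul_le_sum univ (fun j => #(assigned (column p j))) m fun j _ => h j
  simp [sum_card_assigned_column] at this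
  omega


def zeroCompletion (p : Cell m → Option (Symb m)) : Cell m → Symb m :=
  fun c => (p c).getD (PSym.zero _ _ _)

theorem extends_zeroCompletion (p : Cell m → Option (Symb m)) : Extends (zeroCompletion p) p :=
  fun c s h => by simp [zeroCompletion, h]

theorem fFun_zeroCompletion {p : Cell m → Option (Symb m)} (hp : AdversaryInv p) :
    fFun (2 * m) m (zeroCompletion p) = false := by
  rw [fFun, if_neg]
  rintro ⟨b, a, hcol, -⟩
  obtain ⟨i, hi⟩ := (hp b).exists_eq_none_or_zeroTo b
  have := (hcol b).2 rfl i
  rcases hi with hi | hi <;> simp_all [zeroCompletion, column, zeroTo, PSym.zero]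


structure TreeLayout (p : Cell m → Option (Symb m)) (b : Fin m) where
  place : {u // u ∈ internalNodes m} → Cell m
  leaf : Fin m → Cell m
  place_injective : Injective place
  place_free : ∀ v, p (place v) = none
  column_place_eq_iff : ∀ v, (place v).2 = b ↔ v.1 = []
  place_ne_leaf : ∀ v j, j ≠ b → place v ≠ leaf j
  leaf_column : ∀ j, (leaf j).2 = j
  leaf_free_or_zeroTo : ∀ j, j ≠ b → p (leaf j) = none ∨ p (leaf j) = some (zeroTo b)

namespace TreeLayout

variable {p : Cell m → Option (Symb m)} {b : Fin m} (T : TreeLayout p b)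

/-- The cell holding tree node `w`, if any: the leaf labeled `b` is not placed. -/
noncomputable def nodeCell (w : List Bool) : Option (Cell m) :=
  if h : w ∈ internalNodes m then some (T.place ⟨w, h⟩)
  else if h : ∃ j : Fin m, j ≠ b ∧ w = treePath m j then some (T.leaf h.choose) else none

/-- The back pointer `some b` of the internal nodes only serves to make the root differ from
`(1,⊥,⊥,⊥)`. -/
noncomputable def input : Cell m → Symb m :=
  extend T.place
    (fun v => ⟨true, T.nodeCell (v.1 ++ [false]), T.nodeCell (v.1 ++ [true]), some b⟩)
    fun c => if ∃ j, j ≠ b ∧ T.leaf j = c then zeroTo b else (p c).getD (PSym.one _ _ _)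

theorem input_place (v : {u // u ∈ internalNodes m}) :
    T.input (T.place v) =
      ⟨true, T.nodeCell (v.1 ++ [false]), T.nodeCell (v.1 ++ [true]), some b⟩ :=
  T.place_injective.extend_apply _ _ _

theorem input_of_forall_place_ne {c : Cell m} (hc : ∀ v, T.place v ≠ c) :
    T.input c = if ∃ j, j ≠ b ∧ T.leaf j = c then zeroTo b else (p c).getD (PSym.one _ _ _) :=
  extend_apply' _ _ _ fun ⟨v, hv⟩ => hc v hv

theorem input_leaf {j : Fin m} (hj : j ≠ b) : T.input (T.leaf j) = zeroTo b := by
  rw [T.input_of_forall_place_ne fun v => T.place_ne_leaf v j hj, if_pos ⟨j, hj, rfl⟩]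

theorem extends_input : Extends T.input p := by
  intro c s hs
  rw [T.input_of_forall_place_ne fun v hv => by simp [← hv, T.place_free] at hs]
  split_ifs with hleaf
  · obtain ⟨j, hj, rfl⟩ := hleaf
    rcases T.leaf_free_or_zeroTo j hj with h | h <;> simp_all
  · simp [hs]

theorem nodeCell_treePath {j : Fin m} (hj : j ≠ b) :
    T.nodeCell (treePath m j) = some (T.leaf j) := by
  have hex : ∃ j' : Fin m, j' ≠ b ∧ treePath m j = treePath m j' := ⟨j, hj, rfl⟩
  rw [nodeCell, dif_neg (treePath_not_mem_internalNodes j.isLt), dif_pos hex]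
  congr 2
  exact (Fin.ext (treePath_inj j.isLt hex.choose.isLt hex.choose_spec.2)).symm

theorem followPath_input {a : Cell m} (ha : T.nodeCell [] = some a) {j : Fin m}
    {u : List Bool} (hu : u <+: treePath m j) : followPath T.input a u = T.nodeCell u := by
  induction u using List.reverseRecOn with
  | nil => exact ha.symm
  | append_singleton u d ih =>
    have hu' : u <+: treePath m j := (List.prefix_append u [d]).trans hu
    have hint : u ∈ internalNodes m := mem_internalNodes_of_prefix j.isLt hu' fun he => by
      simpa [he] using hu.length_le
    rw [followPath_append_singleton, ih hu', nodeCell, dif_pos hint, Option.bind_some,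
      input_place]
    cases d <;> rfl

theorem input_column_marked (hp : AdversaryInv p) (hb : #(assigned (column p b)) < m)
    {i : Fin (2 * m)} (hi : ∀ v, T.place v ≠ (i, b)) : T.input (i, b) = PSym.one _ _ _ := by
  rw [T.input_of_forall_place_ne hi, if_neg]
  · rcases hs : p (i, b) with _ | s
    · rfl
    · exact (hp b).eq_one hb i s hs
  · rintro ⟨j, hj, hleaf⟩
    exact hj (by simpa [T.leaf_column] using congrArg Prod.snd hleaf)

theorem fCond_input (hm : 2 ≤ m) (hp : AdversaryInv p) (hb : #(assigned (column p b)) < m) :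
    fCond (2 * m) m T.input b (T.place ⟨[], nil_mem_internalNodes hm⟩) := by
  set a := T.place ⟨[], nil_mem_internalNodes hm⟩
  have ha : a.2 = b := (T.column_place_eq_iff _).2 rfl
  have hplace : ∀ i, (i, b) ≠ a → ∀ v, T.place v ≠ (i, b) := by
    intro i hi v hv
    have hroot : v = ⟨[], nil_mem_internalNodes hm⟩ :=
      Subtype.ext ((T.column_place_eq_iff v).1 (by simp [hv]))
    exact hi (by rw [← hv, hroot])
  refine ⟨fun j => ⟨fun hall => ?_, ?_⟩, ha, fun i => ⟨fun hne => ?_, ?_⟩,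
    fun j hj => ?_⟩
  · by_contra hj
    have := hall (T.leaf j).1
    rw [show ((T.leaf j).1, j) = T.leaf j from Prod.ext rfl (T.leaf_column j).symm,
      T.input_leaf hj] at this
    simp [zeroTo] at this
  · rintro rfl i
    by_cases hi : (i, j) = a
    · rw [hi, input_place]
    · rw [T.input_column_marked hp hb (hplace i hi)]; rfl
  · by_contra hi
    exact hne (T.input_column_marked hp hb (hplace i hi))
  · intro hi
    rw [hi, input_place]
    simp [PSym.one]
  · refine ⟨T.leaf j, ?_, T.leaf_column j, by simp [T.input_leaf hj, zeroTo],
      by simp [T.input_leaf hj, zeroTo]⟩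
    rw [T.followPath_input (by simp [nodeCell, nil_mem_internalNodes hm, a])
      (List.prefix_refl _), T.nodeCell_treePath hj]

end TreeLayout


def freeCells (p : Cell m → Option (Symb m)) (b : Fin m) (leaf : Fin m → Cell m) :
    Finset (Cell m) :=
  ((univ \ assigned p) \ univ.image fun i => (i, b)) \ univ.image leaf

theorem mem_freeCells {p : Cell m → Option (Symb m)} {b : Fin m} {leaf : Fin m → Cell m}
    {c : Cell m} :
    c ∈ freeCells p b leaf ↔ p c = none ∧ c.2 ≠ b ∧ ∀ j, c ≠ leaf j := by
  simp only [freeCells, assigned, mem_sdiff, mem_univ, mem_filter, mem_image, true_and,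
    not_exists, Option.not_isSome_iff_eq_none]
  constructor
  · rintro ⟨⟨hc, hb⟩, hl⟩
    exact ⟨hc, fun h => hb c.1 (by rw [← h]), fun j h => hl j h.symm⟩
  · rintro ⟨hc, hb, hl⟩
    exact ⟨⟨hc, by rintro i rfl; exact hb rfl⟩, fun j h => hl j h.symm⟩

theorem le_card_freeCells {p : Cell m → Option (Symb m)} (hm : 4 ≤ m)
    (hcard : #(assigned p) < m * m) (b : Fin m) (leaf : Fin m → Cell m) :
    m - 1 ≤ #(freeCells p b leaf) := by
  have h₁ := le_card_sdiff (univ.image leaf) ((univ \ assigned p) \ univ.image fun i => (i, b))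
  have h₂ := le_card_sdiff (univ.image fun i => (i, b)) (univ \ assigned p)
  have h₃ : #(univ.image leaf) ≤ m := card_image_le.trans (by simp)
  have h₄ : #(univ.image fun i : Fin (2 * m) => (i, b)) ≤ 2 * m :=
    card_image_le.trans (by simp)
  have h₅ : #(univ \ assigned p) = 2 * (m * m) - #(assigned p) := by
    simp [card_univ_sdiff, mul_assoc]
  have h₆ : 4 * m ≤ m * m := Nat.mul_le_mul_right m hm
  rw [freeCells]
  omega

theorem TreeLayout.nonempty {p : Cell m → Option (Symb m)} {b : Fin m} (hm : 4 ≤ m)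
    (hp : AdversaryInv p) (hb : #(assigned (column p b)) < m) (hcard : #(assigned p) < m * m) :
    Nonempty (TreeLayout p b) := by
  choose li hli using fun j => (hp j).exists_eq_none_or_zeroTo b
  set leaf : Fin m → Cell m := fun j => (li j, j)
  obtain ⟨ia, hia⟩ := exists_eq_none_of_card_assigned_lt (q := column p b) (by simp; omega)
  have hint : #((internalNodes m).erase []) ≤ #(freeCells p b leaf) := by
    rw [card_erase_of_mem (nil_mem_internalNodes (by omega))]
    have := card_internalNodes_lt (m := m) (by omega)
    have := le_card_freeCells hm hcard b leaf
    omega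
  obtain ⟨emb⟩ := Function.Embedding.nonempty_of_card_le
    (α := {u // u ∈ (internalNodes m).erase []}) (β := {c // c ∈ freeCells p b leaf})
    (by simpa using hint)
  let place (v : {u // u ∈ internalNodes m}) : Cell m :=
    if h : v.1 = [] then (ia, b) else (emb ⟨v.1, mem_erase.2 ⟨h, v.2⟩⟩).1
  have hroot {v} (h : v.1 = []) : place v = (ia, b) := dif_pos h
  have hnonroot {v} (h : v.1 ≠ []) : place v ∈ freeCells p b leaf := by
    simp only [place, dif_neg h]; exact Subtype.prop _
  have hcolumn {v} : (place v).2 = b ↔ v.1 = [] := by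
    by_cases h : v.1 = []
    · simp [hroot h, h]
    · simp [h, (mem_freeCells.1 (hnonroot h)).2.1]
  refine ⟨⟨place, leaf, fun v w hvw => ?_, fun v => ?_, fun v => hcolumn, fun v j hj => ?_,
    fun j => rfl, fun j _ => hli j⟩⟩
  · by_cases hv : v.1 = [] <;> by_cases hw : w.1 = []
    · exact Subtype.ext (hv.trans hw.symm)
    · exact absurd (hcolumn.1 (by rw [← hvw, hroot hv])) hw
    · exact absurd (hcolumn.1 (by rw [hvw, hroot hw])) hv
    · simp only [place, dif_neg hv, dif_neg hw] at hvw
      simpa using emb.injective (Subtype.ext hvw)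
  · by_cases hv : v.1 = []
    · rw [hroot hv]; exact hia
    · exact (mem_freeCells.1 (hnonroot hv)).1
  · by_cases hv : v.1 = []
    · rw [hroot hv]; exact fun h => hj (congrArg Prod.snd h).symm
    · exact (mem_freeCells.1 (hnonroot hv)).2.2 j

theorem exists_extends_fFun_eq_true {p : Cell m → Option (Symb m)} (hm : 4 ≤ m)
    (hp : AdversaryInv p) (hcard : #(assigned p) < m * m) :
    ∃ x, Extends x p ∧ fFun (2 * m) m x = true := by
  obtain ⟨b, hb⟩ := exists_card_assigned_column_lt hcard
  obtain ⟨T⟩ := TreeLayout.nonempty hm hp hb hcard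
  exact ⟨T.input, T.extends_input, if_pos ⟨b, _, T.fCond_input (by omega) hp hb⟩⟩

end PointerFn

/-- For every integer `m ≥ 4`, the deterministic query complexity of
`f_{2m,m}` satisfies `D(f_{2m,m}) ≥ m²`. -/
theorem statement0 (m : ℕ) (hm : 4 ≤ m) :
    m ^ 2 ≤ detComplexity (fFun (2 * m) m) := by
  have : NeZero m := ⟨by omega⟩
  refine DTree.le_detComplexity_of_adversary PointerFn.adversary PointerFn.AdversaryInv
    PointerFn.adversaryInv_empty (fun p c hc hp => hp.update hc) fun p hp hcard => ?_
  obtain ⟨x, hx, hfx⟩ := PointerFn.exists_extends_fFun_eq_true hm hp (by rwa [sq] at hcard)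
  refine ⟨x, PointerFn.zeroCompletion p, hx, PointerFn.extends_zeroCompletion p, ?_⟩
  rw [hfx, PointerFn.fFun_zeroCompletion hp]
  decide
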